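/- Let $0 < \lambda < \lambda' < 1$. If $\Gamma \subset \mathbb{H}_n$ is an intrinsic $\lambda$-Lipschitz graph, $w$ is a horizontal vector in $\mathrm{Cone}_{\lambda'}$ with $y_n(w) = 1$, and $f_w : V_0 \to \mathbb{R}$ satisfies $\Gamma = \Gamma_{f_w, w}$, then for every $g \in V_0$ the restriction of $f_w$ to the coset $g P_w$ is $\frac{\lambda \lambda'}{\lambda' - \lambda}$-Lipschitz with respect to the Carnot–Carathéodory metric on $\mathbb{H}_n$, where $P_w = V_0 \cap w^{\overline{\Omega}}$. -/
import Mathlib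


open scoped BigOperators
noncomputable section

/-- The Heisenberg group `ℍ_n`, as `ℝ^n × ℝ^n × ℝ`. -/
@[ext]
structure Heis (n : ℕ) where
  x : Fin n → ℝ
  y : Fin n → ℝ
  z : ℝ

namespace Heis

variable {n : ℕ}

/-- The standard symplectic form on `ℝ^{2n}`. -/
def Om (v w : (Fin n → ℝ) × (Fin n → ℝ)) : ℝ :=
  ∑ i, (v.1 i * w.2 i - w.1 i * v.2 i)

/-- The horizontal projection `π : ℍ_n → ℝ^{2n}`. -/
def pr (h : Heis n) : (Fin n → ℝ) × (Fin n → ℝ) := (h.x, h.y)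

lemma Om_add_left (x1 x2 y1 y2 : Fin n → ℝ) (w : (Fin n → ℝ) × (Fin n → ℝ)) :
    Om (x1 + x2, y1 + y2) w = Om (x1, y1) w + Om (x2, y2) w := by
  simp only [Om, Pi.add_apply]
  rw [← Finset.sum_add_distrib]
  exact Finset.sum_congr rfl (fun i _ => by ring)

lemma Om_add_right (v : (Fin n → ℝ) × (Fin n → ℝ)) (x1 x2 y1 y2 : Fin n → ℝ) :
    Om v (x1 + x2, y1 + y2) = Om v (x1, y1) + Om v (x2, y2) := by
  simp only [Om, Pi.add_apply]
  rw [← Finset.sum_add_distrib]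
  exact Finset.sum_congr rfl (fun i _ => by ring)

lemma Om_neg_self (x y : Fin n → ℝ) : Om (-x, -y) (x, y) = 0 := by
  simp only [Om, Pi.neg_apply]
  exact Finset.sum_eq_zero (fun i _ => by ring)

def mul' (g h : Heis n) : Heis n :=
  ⟨g.x + h.x, g.y + h.y, g.z + h.z + Om (pr g) (pr h) / 2⟩

instance : Group (Heis n) where
  mul := mul'
  one := ⟨0, 0, 0⟩
  inv g := ⟨-g.x, -g.y, -g.z⟩
  mul_assoc a b c := by
    show mul' (mul' a b) c = mul' a (mul' b c)
    simp only [mul', pr, Om_add_left, Om_add_right]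
    refine Heis.ext ?_ ?_ ?_
    · exact add_assoc _ _ _
    · exact add_assoc _ _ _
    · ring
  one_mul a := by
    show mul' ⟨0, 0, 0⟩ a = a
    simp only [mul', pr, Om]
    refine Heis.ext ?_ ?_ ?_ <;> simp
  mul_one a := by
    show mul' a ⟨0, 0, 0⟩ = a
    simp only [mul', pr, Om]
    refine Heis.ext ?_ ?_ ?_ <;> simp
  inv_mul_cancel a := by
    show mul' ⟨-a.x, -a.y, -a.z⟩ a = ⟨0, 0, 0⟩
    simp only [mul', pr]
    refine Heis.ext ?_ ?_ ?_
    · simp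
    · simp
    · simp [Om_neg_self]

lemma mul_def (g h : Heis n) :
    g * h = ⟨g.x + h.x, g.y + h.y, g.z + h.z + Om (pr g) (pr h) / 2⟩ := rfl

lemma one_def : (1 : Heis n) = ⟨0, 0, 0⟩ := rfl

lemma inv_def (g : Heis n) : g⁻¹ = ⟨-g.x, -g.y, -g.z⟩ := rfl

/-- The anisotropic dilations `δ_t`. -/
def dil (t : ℝ) (h : Heis n) : Heis n := ⟨t • h.x, t • h.y, t ^ 2 * h.z⟩

/-- The coordinate function `y_n` (the last `y`-coordinate). -/
def yn (h : Heis n) : ℝ := if hn : n = 0 then 0 else h.y ⟨n - 1, by omega⟩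

/-- A point of `ℍ_n` is a horizontal vector if its `z`-coordinate vanishes. -/
def IsHoriz (h : Heis n) : Prop := h.z = 0

/-- The vertical plane `V_0 = {y_n = 0}`. -/
def V0 (n : ℕ) : Set (Heis n) := {h | yn h = 0}

/-- `w^t = δ_t(w)`, for `w` a horizontal vector. -/
def wpow (w : Heis n) (t : ℝ) : Heis n := dil t w

/-- The projection to `V_0` along cosets of `⟨w⟩`: `Π_w(h) = h ⬝ w^{-y_n(h)}`. -/
def Piw (w : Heis n) (h : Heis n) : Heis n := h * wpow w (-(yn h))

/-- `Ω̄(g,h) = Ω(π(g), π(h))`. -/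
def Obar (g h : Heis n) : ℝ := Om (pr g) (pr h)

/-- The subgroup `P_w = V_0 ∩ w^{Ω̄}`. -/
def Pw (w : Heis n) : Set (Heis n) := {h | yn h = 0 ∧ Obar h w = 0}

/-- The horizontal subspace `C_w = A ∩ V_0 ∩ w^Ω`. -/
def Cw (w : Heis n) : Set (Heis n) := {h | h.z = 0 ∧ yn h = 0 ∧ Obar h w = 0}

/-- The Euclidean inner product of the horizontal coordinates. -/
def edot (g h : Heis n) : ℝ := ∑ i, g.x i * h.x i + ∑ i, g.y i * h.y i

/-- The `w`-intrinsic graph of a function `f : V_0 → ℝ`. -/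
def graphOf (f : Heis n → ℝ) (w : Heis n) : Set (Heis n) :=
  (fun v => v * wpow w (f v)) '' V0 n

/-- The vector `Y_n`. -/
def Yvec (n : ℕ) : Heis n := ⟨0, fun i => if (i : ℕ) = n - 1 then 1 else 0, 0⟩

section Metric

variable [MetricSpace (Heis n)]

/-- The open double cone `Cone_λ`. -/
def Cone (lam : ℝ) : Set (Heis n) := {p | lam * dist (1 : Heis n) p < |yn p|}

/-- `Γ` is an intrinsic `λ`-Lipschitz graph: `(x ⬝ Cone_λ) ∩ Γ = ∅` for all `x ∈ Γ`. -/
def IsIntrinsicLipGraph (lam : ℝ) (Γ : Set (Heis n)) : Prop :=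
  ∀ x ∈ Γ, ∀ c ∈ Cone (n := n) lam, x * c ∉ Γ

end Metric

end Heis


namespace Heis

variable {n : ℕ}

lemma yn_mul' (hn : 0 < n) (g h : Heis n) : yn (g * h) = yn g + yn h := by
  simp [yn, mul_def, Nat.pos_iff_ne_zero.mp hn]

lemma yn_wpow' (hn : 0 < n) (w : Heis n) (t : ℝ) : yn (wpow w t) = t * yn w := by
  simp [yn, wpow, dil, Nat.pos_iff_ne_zero.mp hn]

lemma yn_inv' (hn : 0 < n) (g : Heis n) : yn g⁻¹ = - yn g := by
  simp [yn, inv_def, Nat.pos_iff_ne_zero.mp hn]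

lemma Om_smul (t : ℝ) (x y : Fin n → ℝ) (v : (Fin n → ℝ) × (Fin n → ℝ)) :
    Om (t • x, t • y) v = t * Om (x, y) v := by
  simp only [Om, Finset.mul_sum, Pi.smul_apply, smul_eq_mul]
  exact Finset.sum_congr rfl (fun i _ => by ring)

lemma Om_antisymm (u v : (Fin n → ℝ) × (Fin n → ℝ)) : Om u v = - Om v u := by
  simp only [Om, ← Finset.sum_neg_distrib]
  exact Finset.sum_congr rfl (fun i _ => by ring)

lemma wpow_add (w : Heis n) (hw : IsHoriz w) (a b : ℝ) :
    wpow w a * wpow w b = wpow w (a + b) := by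
  have hz : w.z = 0 := hw
  refine Heis.ext ?_ ?_ ?_
  · simp [wpow, dil, mul_def, add_smul]
  · simp [wpow, dil, mul_def, add_smul]
  · simp only [wpow, dil, mul_def, hz, mul_zero, add_zero, zero_add, pr, Om]
    have : ∀ i ∈ Finset.univ,
        (a • w.x) i * (b • w.y) i - (b • w.x) i * (a • w.y) i = (0:ℝ) := by
      intro i _; simp only [Pi.smul_apply, smul_eq_mul]; ring
    rw [Finset.sum_congr rfl this]
    simp

lemma wpow_zero (w : Heis n) : wpow w 0 = 1 := by
  refine Heis.ext ?_ ?_ ?_ <;> simp [wpow, dil, one_def]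

lemma one_dil (t : ℝ) : dil t (1 : Heis n) = 1 := by
  refine Heis.ext ?_ ?_ ?_ <;> simp [dil, one_def]

lemma wpow_comm (w h : Heis n) (hOb : Obar h w = 0) (s : ℝ) :
    h * wpow w s = wpow w s * h := by
  refine Heis.ext ?_ ?_ ?_
  · simp [mul_def, add_comm]
  · simp [mul_def, add_comm]
  · simp only [mul_def]
    have h1 : Om (pr h) (pr (wpow w s)) = 0 := by
      have : pr (wpow w s) = (s • w.x, s • w.y) := rfl
      rw [this, Om_antisymm, Om_smul]
      have : Om (w.x, w.y) (pr h) = - Obar h w := by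
        rw [Obar, Om_antisymm]; rfl
      rw [this, hOb]; ring
    have h2 : Om (pr (wpow w s)) (pr h) = 0 := by
      rw [Om_antisymm, h1, neg_zero]
    rw [h1, h2]; ring

end Heis

open Heis in
/-- (For any homogeneous left-invariant metric on `ℍ_n`, such as the
Carnot–Carathéodory metric.)  Let `0 < λ < λ' < 1`.  If `Γ` is an intrinsic
`λ`-Lipschitz graph, `w` a horizontal vector in `Cone_{λ'}` with `y_n(w) = 1`, and
`Γ = Γ_{f_w, w}`, then for every `g ∈ V₀` the restriction of `f_w` to the coset `g P_w`
is `λλ'/(λ' - λ)`-Lipschitz. -/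
theorem parametrizing_function_lipschitz_on_slices {n : ℕ} (hn : 0 < n)
    [MetricSpace (Heis n)]
    (hinv : ∀ g p q : Heis n, dist (g * p) (g * q) = dist p q)
    (hdil : ∀ (t : ℝ) (p q : Heis n), dist (dil t p) (dil t q) = |t| * dist p q)
    (lam lam' : ℝ) (h0 : 0 < lam) (h1 : lam < lam') (h2 : lam' < 1)
    (Γ : Set (Heis n)) (hΓ : IsIntrinsicLipGraph lam Γ)
    (w : Heis n) (hw : IsHoriz w) (hwc : w ∈ Cone lam') (hwy : yn w = 1)
    (f : Heis n → ℝ) (hf : Γ = graphOf f w) :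
    ∀ g ∈ V0 n, ∀ u ∈ (g * ·) '' Pw w, ∀ v ∈ (g * ·) '' Pw w,
      |f u - f v| ≤ (lam * lam' / (lam' - lam)) * dist u v := by
  intro g hg u hu v hv
  obtain ⟨a, ha, rfl⟩ := hu
  obtain ⟨b, hb, rfl⟩ := hv
  show |f (g * a) - f (g * b)| ≤ (lam * lam' / (lam' - lam)) * dist (g * a) (g * b)
  set u := g * a with hu_def
  set v := g * b with hv_def
  have hynu : yn u = 0 := by rw [hu_def, yn_mul' hn, hg, ha.1]; ring
  have hynv : yn v = 0 := by rw [hv_def, yn_mul' hn, hg, hb.1]; ring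
  set p := u * wpow w (f u) with hp_def
  set q := v * wpow w (f v) with hq_def
  have hpΓ : p ∈ Γ := hf ▸ ⟨u, hynu, rfl⟩
  have hqΓ : q ∈ Γ := hf ▸ ⟨v, hynv, rfl⟩
  set c := q⁻¹ * p with hc_def
  have hcnot : c ∉ Cone (n := n) lam := fun hmem =>
    hΓ q hqΓ c hmem (by rw [hc_def, mul_inv_cancel_left]; exact hpΓ)
  have hkey : |yn c| ≤ lam * dist (1 : Heis n) c := not_lt.mp hcnot
  have hync : yn c = f u - f v := by
    have hy1 : yn p = f u := by
      rw [hp_def, yn_mul' hn, yn_wpow' hn, hwy, hynu]; ring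
    have hy2 : yn q = f v := by
      rw [hq_def, yn_mul' hn, yn_wpow' hn, hwy, hynv]; ring
    rw [hc_def, yn_mul' hn, yn_inv' hn, hy1, hy2]; ring
  have hdc : dist (1 : Heis n) c = dist q p := by
    have h6 := hinv q 1 c
    rw [mul_one, hc_def, mul_inv_cancel_left] at h6
    exact h6.symm
  -- distance from u*w^{f v} to p
  have hd2 : dist (u * wpow w (f v)) p = |f u - f v| * dist (1 : Heis n) w := by
    rw [hp_def, hinv u]
    have h3 := hinv (wpow w (-(f v))) (wpow w (f v)) (wpow w (f u))
    rw [wpow_add w hw, neg_add_cancel, wpow_zero] at h3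
    rw [← h3]
    have : wpow w (-(f v)) * wpow w (f u) = wpow w (f u - f v) := by
      rw [wpow_add w hw]; ring_nf
    rw [this]
    have h4 : wpow w (f u - f v) = dil (f u - f v) w := rfl
    have h5 := hdil (f u - f v) (1 : Heis n) w
    rw [one_dil] at h5
    rw [h4, h5]
  -- distance from q to u*w^{f v}
  have hd1 : dist q (u * wpow w (f v)) = dist u v := by
    have hcomm_b : b * wpow w (f v) = wpow w (f v) * b := wpow_comm w b hb.2 _
    have hcomm_a : a * wpow w (f v) = wpow w (f v) * a := wpow_comm w a ha.2 _
    have e1 : q = (g * wpow w (f v)) * b := by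
      rw [hq_def, hv_def, mul_assoc, hcomm_b, ← mul_assoc]
    have e2 : u * wpow w (f v) = (g * wpow w (f v)) * a := by
      rw [hu_def, mul_assoc, hcomm_a, ← mul_assoc]
    rw [e1, e2, hinv]
    have h7 := hinv g b a
    rw [← hu_def, ← hv_def] at h7
    rw [← h7]
    exact dist_comm v u
  have htri : dist q p ≤ dist u v + |f u - f v| * dist (1 : Heis n) w := by
    calc dist q p ≤ dist q (u * wpow w (f v)) + dist (u * wpow w (f v)) p :=
          dist_triangle _ _ _
      _ = dist u v + |f u - f v| * dist (1 : Heis n) w := by rw [hd1, hd2]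
  -- bound on dist 1 w
  have hdw : lam' * dist (1 : Heis n) w < 1 := by
    have := hwc
    simp only [Cone, Set.mem_setOf_eq, hwy] at this
    simpa using this
  -- combine
  have hmain : |f u - f v| ≤ lam * (dist u v + |f u - f v| * dist (1 : Heis n) w) := by
    calc |f u - f v| = |yn c| := by rw [hync]
      _ ≤ lam * dist (1 : Heis n) c := hkey
      _ = lam * dist q p := by rw [hdc]
      _ ≤ lam * (dist u v + |f u - f v| * dist (1 : Heis n) w) := by
          exact mul_le_mul_of_nonneg_left htri h0.le
  have hdenom : 0 < lam' - lam := by linarith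
  rw [div_mul_eq_mul_div, le_div_iff₀ hdenom]
  have habs : (0:ℝ) ≤ |f u - f v| := abs_nonneg _
  have hdw0 : (0:ℝ) ≤ dist (1 : Heis n) w := dist_nonneg
  have hduv : (0:ℝ) ≤ dist u v := dist_nonneg
  nlinarith [mul_le_mul_of_nonneg_left hmain (le_of_lt (lt_trans h0 h1)),
    mul_nonneg (mul_nonneg h0.le habs) (by linarith : (0:ℝ) ≤ 1 - lam' * dist (1 : Heis n) w)]
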